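/- arXiv:math/0703146 — 2 statements merged into one kernel-verified Lean document; each statement's English description precedes it below -/
import Mathlib

section
/- Khintchine's Transference Principle, lower bound: for any point Θ = (θ_1,…,θ_n) ∈ R^n with 1, θ_1, …, θ_n linearly independent over Q, one has ω_0(Θ) ≥ ω_{n−1}(Θ) / ((n−1)·ω_{n−1}(Θ) + n) (interpreted as ω_0(Θ) ≥ 1/(n−1) when ω_{n−1}(Θ) = +∞). -/
/-- `ω_0(Θ)`: the ordinary exponent of simultaneous rational approximation to
`θ_1, …, θ_n` (Definition 1 of the paper), as an extended real number. -/
noncomputable def omegaSim (n : ℕ) (θ : Fin n → ℝ) : EReal :=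
  sSup (Real.toEReal '' {ω : ℝ |
    {x : Fin (n + 1) → ℤ |
      ‖fun i : Fin n => (x 0 : ℝ) * θ i - (x i.succ : ℝ)‖ ≤
        ‖fun i : Fin (n + 1) => (x i : ℝ)‖ ^ (-ω)}.Infinite})

/-- `ω_{n-1}(Θ)`: the ordinary exponent of approximation by the linear form
`x_0 + x_1 θ_1 + ⋯ + x_n θ_n` (Definition 1 of the paper). -/
noncomputable def omegaLin (n : ℕ) (θ : Fin n → ℝ) : EReal :=
  sSup (Real.toEReal '' {ω : ℝ |
    {x : Fin (n + 1) → ℤ |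
      |(x 0 : ℝ) + ∑ i : Fin n, (x i.succ : ℝ) * θ i| ≤
        ‖fun i : Fin (n + 1) => (x i : ℝ)‖ ^ (-ω)}.Infinite})

/-- `ω̂_0(Θ)`: the uniform exponent of simultaneous rational approximation
(Definition 3 of the paper). -/
noncomputable def omegaSimHat (n : ℕ) (θ : Fin n → ℝ) : EReal :=
  sSup (Real.toEReal '' {ω : ℝ | ∃ X₀ : ℝ, ∀ X : ℝ, X₀ ≤ X →
    ∃ x : Fin (n + 1) → ℤ, x ≠ 0 ∧ (∀ i, |(x i : ℝ)| ≤ X) ∧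
      ‖fun i : Fin n => (x 0 : ℝ) * θ i - (x i.succ : ℝ)‖ ≤ X ^ (-ω)})

/-- `ω̂_{n-1}(Θ)`: the uniform exponent of approximation by the linear form
(Definition 3 of the paper). -/
noncomputable def omegaLinHat (n : ℕ) (θ : Fin n → ℝ) : EReal :=
  sSup (Real.toEReal '' {ω : ℝ | ∃ X₀ : ℝ, ∀ X : ℝ, X₀ ≤ X →
    ∃ x : Fin (n + 1) → ℤ, x ≠ 0 ∧ (∀ i, |(x i : ℝ)| ≤ X) ∧
      |(x 0 : ℝ) + ∑ i : Fin n, (x i.succ : ℝ) * θ i| ≤ X ^ (-ω)})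

open MeasureTheory Submodule Set

variable {n : ℕ}

/-- The matrix `Q`: upper triangular, diag `(L,1,…,1)`. -/
noncomputable def Qmat (L : ℝ) (a : Fin (n+1) → ℤ) : Matrix (Fin (n+1)) (Fin (n+1)) ℝ :=
  fun i => Fin.cases (fun j => Fin.cases L (fun k => -(a k.succ : ℝ)) j)
    (fun i' j => if j = i'.succ then 1 else 0) i

/-- The matrix `P`: lower triangular, diag `(1,-1,…,-1)`. -/
noncomputable def Pmat (θ : Fin n → ℝ) : Matrix (Fin (n+1)) (Fin (n+1)) ℝ :=
  fun i => Fin.cases (fun j => Fin.cases 1 (fun _ => 0) j)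
    (fun i' j => Fin.cases (θ i') (fun j' => if j' = i' then -1 else 0) j) i

lemma Qmat_det (L : ℝ) (a : Fin (n+1) → ℤ) : (Qmat L a).det = L := by
  rw [Matrix.det_of_upperTriangular]
  · rw [Fin.prod_univ_succ]
    simp [Qmat]
  · intro i j hij
    induction i using Fin.cases with
    | zero => exact absurd hij (Fin.not_lt_zero j).elim
    | succ i' => simp only [Qmat, Fin.cases_succ]; exact if_neg (show j ≠ i'.succ from ne_of_lt hij)

lemma Pmat_det (θ : Fin n → ℝ) : (Pmat θ).det = (-1) ^ n := by
  rw [Matrix.det_of_lowerTriangular]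
  · rw [Fin.prod_univ_succ]
    simp [Pmat]
  · intro i j hij
    have hij' : i < j := hij
    induction j using Fin.cases with
    | zero => exact absurd hij' (Fin.not_lt_zero i).elim
    | succ j' =>
      induction i using Fin.cases with
      | zero => simp [Pmat]
      | succ i' =>
        simp only [Pmat, Fin.cases_succ]
        rw [if_neg]
        intro h
        rw [h] at hij'
        exact lt_irrefl _ hij'

lemma Pmat_mulVec (θ : Fin n → ℝ) (x : Fin (n+1) → ℝ) :
    (Pmat θ).mulVec x = Fin.cons (x 0) (fun i => θ i * x 0 - x i.succ) := by
  funext i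
  induction i using Fin.cases with
  | zero =>
    simp only [Matrix.mulVec, dotProduct, Fin.cons_zero]
    rw [Fin.sum_univ_succ]
    simp [Pmat]
  | succ i' =>
    simp only [Matrix.mulVec, dotProduct, Fin.cons_succ]
    rw [Fin.sum_univ_succ]
    simp only [Pmat, Fin.cases_succ, Fin.cases_zero]
    simp [ite_mul, Finset.sum_ite_eq', sub_eq_add_neg]

lemma Qmat_mulVec (L : ℝ) (a : Fin (n+1) → ℤ) (z : Fin (n+1) → ℝ) :
    (Qmat L a).mulVec z
      = Fin.cons (L * z 0 - ∑ k : Fin n, (a k.succ : ℝ) * z k.succ) (fun i => z i.succ) := by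
  funext i
  induction i using Fin.cases with
  | zero =>
    simp only [Matrix.mulVec, dotProduct, Fin.cons_zero]
    rw [Fin.sum_univ_succ]
    simp only [Qmat, Fin.cases_zero, Fin.cases_succ]
    rw [Finset.sum_congr rfl fun k _ => neg_mul ((a k.succ : ℝ)) (z k.succ),
      Finset.sum_neg_distrib]
    ring
  | succ i' =>
    simp only [Matrix.mulVec, dotProduct, Fin.cons_succ]
    rw [Fin.sum_univ_succ]
    simp only [Qmat, Fin.cases_succ]
    simp [Fin.succ_inj, eq_comm (a := (0 : Fin (n+1))), ite_mul, Finset.sum_ite_eq', Fin.succ_ne_zero]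

lemma exists_good_y (θ : Fin n → ℝ) (a : Fin (n+1) → ℤ)
    (hL : (a 0 : ℝ) + ∑ i : Fin n, (a i.succ : ℝ) * θ i ≠ 0) {ρ : ℝ} (hρ : 0 < ρ)
    (hvol : |(a 0 : ℝ) + ∑ i : Fin n, (a i.succ : ℝ) * θ i| * 2 < ρ ^ n) :
    ∃ y : Fin (n+1) → ℤ, y ≠ 0 ∧
      a 0 * y 0 + ∑ i : Fin n, a i.succ * y i.succ = 0 ∧
      ∀ i : Fin n, |(y 0 : ℝ) * θ i - (y i.succ : ℝ)| ≤ ρ := by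
  classical
  set L : ℝ := (a 0 : ℝ) + ∑ i : Fin n, (a i.succ : ℝ) * θ i with hLdef
  have habs : 0 < |L| := abs_pos.2 hL
  set M := Qmat L a * Pmat θ with hM
  have hdet : M.det = L * (-1) ^ n := by rw [hM, Matrix.det_mul, Qmat_det, Pmat_det]
  set f := Matrix.toLin' M with hf
  have hfdetval : LinearMap.det f = L * (-1) ^ n := by rw [hf, LinearMap.det_toLin', hdet]
  have hfdet : LinearMap.det f ≠ 0 := by
    rw [hfdetval]
    exact mul_ne_zero hL (pow_ne_zero _ (by norm_num))
  have hfx : ∀ x : Fin (n+1) → ℝ,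
      f x = Fin.cons (∑ j : Fin (n+1), (a j : ℝ) * x j)
        (fun i => θ i * x 0 - x i.succ) := by
    intro x
    have h1 : f x = (Qmat L a).mulVec ((Pmat θ).mulVec x) := by
      rw [hf, Matrix.toLin'_apply, hM, ← Matrix.mulVec_mulVec]
    rw [h1, Pmat_mulVec, Qmat_mulVec]
    funext j
    induction j using Fin.cases with
    | succ i => simp only [Fin.cons_succ]
    | zero =>
      simp only [Fin.cons_zero, Fin.cons_succ]
      rw [Fin.sum_univ_succ (f := fun j => (a j : ℝ) * x j)]
      have expand : ∑ k : Fin n, (a k.succ : ℝ) * (θ k * x 0 - x k.succ)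
          = (∑ k : Fin n, (a k.succ : ℝ) * θ k) * x 0
            - ∑ k : Fin n, (a k.succ : ℝ) * x k.succ := by
        rw [Finset.sum_mul, ← Finset.sum_sub_distrib]
        exact Finset.sum_congr rfl fun k _ => by ring
      rw [expand, hLdef]
      ring
  set r : Fin (n+1) → ℝ := Fin.cons (1/2) (fun _ => ρ) with hr
  set B : Set (Fin (n+1) → ℝ) := Set.pi Set.univ (fun j => Set.Icc (-(r j)) (r j)) with hB
  set s : Set (Fin (n+1) → ℝ) := ⇑f ⁻¹' B with hs
  have hvolB : volume B = ENNReal.ofReal ((2*ρ)^n) := by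
    rw [hB, volume_pi_pi]
    have : ∀ j : Fin (n+1), volume (Set.Icc (-(r j)) (r j)) = ENNReal.ofReal (2 * r j) := by
      intro j; rw [Real.volume_Icc]; ring_nf
    simp_rw [this]
    rw [Fin.prod_univ_succ]
    have h0 : ENNReal.ofReal (2 * r 0) = 1 := by
      rw [hr]; norm_num
    rw [h0, one_mul]
    have h1 : ∀ k : Fin n, ENNReal.ofReal (2 * r k.succ) = ENNReal.ofReal (2 * ρ) := by
      intro k; rw [hr]; simp
    simp_rw [h1]
    rw [Finset.prod_const, Finset.card_univ, Fintype.card_fin,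
      ← ENNReal.ofReal_pow (by positivity)]
  have hvols : volume s = ENNReal.ofReal (|L|⁻¹ * (2*ρ)^n) := by
    rw [hs, MeasureTheory.Measure.addHaar_preimage_linearMap volume hfdet, hvolB, hfdetval,
      ← ENNReal.ofReal_mul (by positivity)]
    congr 2
    rw [abs_inv, abs_mul, abs_pow, abs_neg, abs_one, one_pow, mul_one]
  -- the lattice
  have fund := ZSpan.isAddFundamentalDomain' (Pi.basisFun ℝ (Fin (n+1))) volume
  have hvolF : volume (ZSpan.fundamentalDomain (Pi.basisFun ℝ (Fin (n+1)))) = 1 := by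
    rw [ZSpan.fundamentalDomain_pi_basisFun, volume_pi_pi]
    simp [Real.volume_Ico]
  have hsymm : ∀ x ∈ s, -x ∈ s := by
    intro x hx
    rw [hs, Set.mem_preimage] at hx ⊢
    rw [map_neg]
    rw [hB, Set.mem_pi] at hx ⊢
    intro j hj
    have := hx j hj
    rw [Set.mem_Icc] at this ⊢
    constructor <;> simp only [Pi.neg_apply] <;> linarith [this.1, this.2]
  have hconv : Convex ℝ s := by
    refine Convex.linear_preimage ?_ f
    exact convex_pi fun j _ => convex_Icc _ _
  have hlt : volume (ZSpan.fundamentalDomain (Pi.basisFun ℝ (Fin (n+1)))) * 2 ^ Module.finrank ℝ (Fin (n+1) → ℝ)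
      < volume s := by
    rw [hvolF, one_mul, hvols, Module.finrank_pi, Fintype.card_fin]
    have h2 : ((2:ENNReal)) ^ (n+1) = ENNReal.ofReal (2^(n+1)) := by
      rw [ENNReal.ofReal_pow (by norm_num)]
      norm_num
    rw [h2, ENNReal.ofReal_lt_ofReal_iff (by positivity)]
    rw [mul_pow]
    rw [show (2:ℝ)^(n+1) = |L|⁻¹ * (|L| * 2 * 2^n) by field_simp; ring]
    have : |L| * 2 * 2^n < 2^n * ρ^n := by
      have := mul_lt_mul_of_pos_left hvol (show (0:ℝ) < 2^n by positivity)
      nlinarith [this]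
    have hpos : (0:ℝ) < |L|⁻¹ := by positivity
    exact mul_lt_mul_of_pos_left this hpos
  haveI : Countable (span ℤ (Set.range ⇑(Pi.basisFun ℝ (Fin (n+1))))).toAddSubgroup := by
    change Countable (span ℤ (Set.range ⇑(Pi.basisFun ℝ (Fin (n+1)))))
    exact Countable.of_equiv _ (Module.Basis.restrictScalars ℤ (Pi.basisFun ℝ (Fin (n+1)))).repr.toEquiv.symm
  obtain ⟨x, hxne, hxs⟩ :=
    MeasureTheory.exists_ne_zero_mem_lattice_of_measure_mul_two_pow_lt_measure fund hsymm hconv hlt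
  -- extract integer coordinates
  have hxmem : (x : Fin (n+1) → ℝ) ∈ span ℤ (Set.range (Pi.basisFun ℝ (Fin (n+1)))) := by
    exact SetLike.coe_mem _
  rw [(Pi.basisFun ℝ (Fin (n+1))).mem_span_iff_repr_mem ℤ] at hxmem
  choose y hy using hxmem
  have hyx : ∀ i, (y i : ℝ) = (x : Fin (n+1) → ℝ) i := by
    intro i
    have := hy i
    rw [Pi.basisFun_repr] at this
    simpa using this
  refine ⟨y, ?_, ?_, ?_⟩
  · intro h
    apply hxne
    have : (x : Fin (n+1) → ℝ) = 0 := by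
      funext i
      rw [← hyx i, h]
      simp
    ext
    exact congrFun this _
  · -- the linear form vanishes
    have hmem : f (x : Fin (n+1) → ℝ) ∈ B := hxs
    rw [hfx, hB, Set.mem_pi] at hmem
    have h0 := hmem 0 (Set.mem_univ _)
    rw [Fin.cons_zero, Set.mem_Icc] at h0
    have habs0 : |∑ j : Fin (n+1), (a j : ℝ) * (x : Fin (n+1) → ℝ) j| ≤ 1/2 := by
      rw [abs_le]
      constructor
      · have := h0.1; rw [hr] at this; simpa using this
      · have := h0.2; rw [hr] at this; simpa using this
    have hsum : ∑ j : Fin (n+1), (a j : ℝ) * (x : Fin (n+1) → ℝ) j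
        = ((a 0 * y 0 + ∑ i : Fin n, a i.succ * y i.succ : ℤ) : ℝ) := by
      rw [Fin.sum_univ_succ]
      push_cast
      rw [← hyx 0]
      congr 1
      exact Finset.sum_congr rfl fun i _ => by rw [← hyx i.succ]
    rw [hsum] at habs0
    have : |(a 0 * y 0 + ∑ i : Fin n, a i.succ * y i.succ : ℤ)| < 1 := by
      have h1 : (|(a 0 * y 0 + ∑ i : Fin n, a i.succ * y i.succ : ℤ)| : ℝ) ≤ 1/2 := by
        rw [← Int.cast_abs] at habs0 ⊢
        exact habs0
      have h2 : (|(a 0 * y 0 + ∑ i : Fin n, a i.succ * y i.succ : ℤ)| : ℝ) < 1 :=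
        lt_of_le_of_lt h1 (by norm_num)
      exact_mod_cast h2
    exact Int.abs_lt_one_iff.1 this
  · intro i
    have hmem : f (x : Fin (n+1) → ℝ) ∈ B := hxs
    rw [hfx, hB, Set.mem_pi] at hmem
    have hi := hmem i.succ (Set.mem_univ _)
    rw [Fin.cons_succ, Set.mem_Icc] at hi
    have hri : r i.succ = ρ := by rw [hr]; simp
    rw [hri] at hi
    rw [← hyx 0, ← hyx i.succ] at hi
    rw [abs_le]
    constructor
    · have := hi.1; linarith [this, (by ring : (y 0 : ℝ) * θ i = θ i * (y 0 : ℝ))]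
    · have := hi.2; linarith [this, (by ring : (y 0 : ℝ) * θ i = θ i * (y 0 : ℝ))]

lemma L_ne_zero (θ : Fin n → ℝ)
    (hθ : LinearIndependent ℚ (Fin.cons (1 : ℝ) θ : Fin (n + 1) → ℝ))
    (a : Fin (n+1) → ℤ) (ha : a ≠ 0) :
    (a 0 : ℝ) + ∑ i : Fin n, (a i.succ : ℝ) * θ i ≠ 0 := by
  intro h
  rw [Fintype.linearIndependent_iff] at hθ
  have key : ∑ j : Fin (n+1), ((a j : ℚ)) • (Fin.cons (1:ℝ) θ : Fin (n+1) → ℝ) j = 0 := by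
    have : ∑ j : Fin (n+1), ((a j : ℚ)) • (Fin.cons (1:ℝ) θ : Fin (n+1) → ℝ) j
        = (a 0 : ℝ) + ∑ i : Fin n, (a i.succ : ℝ) * θ i := by
      rw [Fin.sum_univ_succ]
      simp [Fin.cons_zero, Fin.cons_succ, Rat.smul_def]
    rw [this, h]
  have := hθ (fun j => (a j : ℚ)) key
  apply ha
  funext j
  have hj : (a j : ℚ) = 0 := this j
  simp only [Pi.zero_apply]
  exact_mod_cast hj

lemma form_ne_zero (θ : Fin n → ℝ)
    (hθ : LinearIndependent ℚ (Fin.cons (1 : ℝ) θ : Fin (n + 1) → ℝ))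
    (y : Fin (n+1) → ℤ) (hy0 : y 0 ≠ 0) (i₀ : Fin n) :
    (y 0 : ℝ) * θ i₀ - (y i₀.succ : ℝ) ≠ 0 := by
  intro h
  rw [Fintype.linearIndependent_iff] at hθ
  classical
  set g : Fin (n+1) → ℚ := fun j => if j = 0 then (-(y i₀.succ : ℚ)) else
    if j = i₀.succ then (y 0 : ℚ) else 0 with hg
  have key : ∑ j : Fin (n+1), g j • (Fin.cons (1:ℝ) θ : Fin (n+1) → ℝ) j = 0 := by
    rw [Fin.sum_univ_succ]
    simp only [hg, Fin.cons_zero, Fin.cons_succ, if_pos rfl]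
    have h1 : ∀ k : Fin n, (if (k.succ : Fin (n+1)) = 0 then (-(y i₀.succ : ℚ)) else
        if (k.succ : Fin (n+1)) = i₀.succ then (y 0 : ℚ) else 0) • θ k
        = (if k = i₀ then ((y 0 : ℚ)) • θ k else 0) := by
      intro k
      rw [if_neg (Fin.succ_ne_zero k)]
      by_cases hk : k = i₀
      · subst hk; simp
      · rw [if_neg hk, if_neg (fun hh => hk (Fin.succ_injective _ hh)), zero_smul]
    rw [Finset.sum_congr rfl fun k _ => h1 k, Finset.sum_ite_eq' Finset.univ i₀]
    simp only [Finset.mem_univ, if_true, Rat.smul_def, smul_eq_mul]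
    push_cast
    linarith [h]
  have := hθ g key
  have h2 := this i₀.succ
  rw [hg] at h2
  simp only [if_neg (Fin.succ_ne_zero i₀), if_pos rfl] at h2
  exact hy0 (by exact_mod_cast h2)

lemma construction (hn : 1 ≤ n) (θ : Fin n → ℝ)
    (hθ : LinearIndependent ℚ (Fin.cons (1 : ℝ) θ : Fin (n + 1) → ℝ))
    (a : Fin (n+1) → ℤ) (ha : a ≠ 0) (A : ℝ) (hA : ∀ i : Fin n, |(a i.succ : ℝ)| ≤ A)
    (hδ4 : |(a 0 : ℝ) + ∑ i : Fin n, (a i.succ : ℝ) * θ i| < 1/4) :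
    ∃ y : Fin (n+1) → ℤ, y 0 ≠ 0 ∧
      (∀ i : Fin n, |(y 0 : ℝ) * θ i - (y i.succ : ℝ)| ≤
        (4 * |(a 0 : ℝ) + ∑ i : Fin n, (a i.succ : ℝ) * θ i|) ^ ((n:ℝ)⁻¹)) ∧
      |(y 0 : ℝ)| * |(a 0 : ℝ) + ∑ i : Fin n, (a i.succ : ℝ) * θ i| ≤
        (n : ℝ) * A * (4 * |(a 0 : ℝ) + ∑ i : Fin n, (a i.succ : ℝ) * θ i|) ^ ((n:ℝ)⁻¹) := by
  have hL : (a 0 : ℝ) + ∑ i : Fin n, (a i.succ : ℝ) * θ i ≠ 0 := L_ne_zero θ hθ a ha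
  set L : ℝ := (a 0 : ℝ) + ∑ i : Fin n, (a i.succ : ℝ) * θ i with hLdef
  set δ : ℝ := |L| with hδdef
  have hδpos : 0 < δ := abs_pos.2 hL
  set ρ : ℝ := (4 * δ) ^ ((n:ℝ)⁻¹) with hρdef
  have hρpos : 0 < ρ := Real.rpow_pos_of_pos (by positivity) _
  have hρn : ρ ^ n = 4 * δ := by
    rw [hρdef]
    exact Real.rpow_inv_natCast_pow (by positivity) (by omega)
  have hvol : δ * 2 < ρ ^ n := by rw [hρn]; linarith
  obtain ⟨y, hyne, hzero, hform⟩ := exists_good_y θ a hL hρpos hvol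
  have hρlt1 : ρ < 1 := by
    by_contra hc
    push_neg at hc
    have : (1:ℝ) ≤ ρ ^ n := one_le_pow₀ hc
    rw [hρn] at this
    linarith
  have hy0 : y 0 ≠ 0 := by
    intro h0
    apply hyne
    funext j
    induction j using Fin.cases with
    | zero => exact h0
    | succ i =>
      have := hform i
      rw [h0] at this
      simp only [Int.cast_zero, zero_mul, zero_sub, abs_neg] at this
      have h1 : |(y i.succ : ℝ)| < 1 := lt_of_le_of_lt this hρlt1
      rw [← Int.cast_abs, show (1:ℝ) = ((1:ℤ):ℝ) by norm_num, Int.cast_lt] at h1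
      exact Int.abs_lt_one_iff.1 h1
  refine ⟨y, hy0, hform, ?_⟩
  -- key identity
  have hcast : (a 0 : ℝ) * (y 0 : ℝ) + ∑ i : Fin n, (a i.succ : ℝ) * (y i.succ : ℝ) = 0 := by
    have := hzero
    have h2 : ((a 0 * y 0 + ∑ i : Fin n, a i.succ * y i.succ : ℤ) : ℝ) = 0 := by
      rw [this]; simp
    push_cast at h2
    exact h2
  have hid : (y 0 : ℝ) * L = ∑ i : Fin n, (a i.succ : ℝ) * ((y 0 : ℝ) * θ i - (y i.succ : ℝ)) := by
    have expand : ∑ i : Fin n, (a i.succ : ℝ) * ((y 0 : ℝ) * θ i - (y i.succ : ℝ))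
        = (∑ i : Fin n, (a i.succ : ℝ) * θ i) * (y 0 : ℝ)
          - ∑ i : Fin n, (a i.succ : ℝ) * (y i.succ : ℝ) := by
      rw [Finset.sum_mul, ← Finset.sum_sub_distrib]
      exact Finset.sum_congr rfl fun i _ => by ring
    rw [expand, hLdef]
    linear_combination hcast
  have hA0 : 0 ≤ A := le_trans (abs_nonneg _) (hA ⟨0, hn⟩)
  calc |(y 0 : ℝ)| * δ = |(y 0 : ℝ) * L| := by rw [abs_mul, hδdef]
    _ = |∑ i : Fin n, (a i.succ : ℝ) * ((y 0 : ℝ) * θ i - (y i.succ : ℝ))| := by rw [hid]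
    _ ≤ ∑ i : Fin n, |(a i.succ : ℝ) * ((y 0 : ℝ) * θ i - (y i.succ : ℝ))| :=
        Finset.abs_sum_le_sum_abs _ _
    _ ≤ ∑ _i : Fin n, A * ρ := by
        refine Finset.sum_le_sum fun i _ => ?_
        rw [abs_mul]
        exact mul_le_mul (hA i) (hform i) (abs_nonneg _) hA0
    _ = (n : ℝ) * A * ρ := by
        rw [Finset.sum_const, Finset.card_univ, Fintype.card_fin, nsmul_eq_mul]
        ring

lemma finite_bounded (m : ℕ) (R : ℝ) : {x : Fin m → ℤ | ∀ i, |(x i : ℝ)| ≤ R}.Finite := by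
  classical
  apply Set.Finite.subset (Set.finite_Icc (fun _ : Fin m => -⌈R⌉) (fun _ => ⌈R⌉))
  intro x hx
  rw [Set.mem_Icc]
  constructor <;> rw [Pi.le_def] <;> intro i <;> have h := hx i <;> rw [abs_le] at h
  · have : -R ≤ (x i : ℝ) := h.1
    have h2 : (-⌈R⌉ : ℝ) ≤ (x i : ℝ) := le_trans (by simpa using neg_le_neg (Int.le_ceil R)) this
    exact_mod_cast h2
  · have : (x i : ℝ) ≤ R := h.2
    have h2 : (x i : ℝ) ≤ (⌈R⌉ : ℝ) := le_trans this (Int.le_ceil R)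
    exact_mod_cast h2

lemma exists_large {S : Set (Fin (n+1) → ℤ)} (hS : S.Infinite) {R : ℝ} (hR : 1 ≤ R) :
    ∃ a ∈ S, a ≠ 0 ∧ R ≤ ‖fun i : Fin (n+1) => (a i : ℝ)‖ := by
  by_contra hc
  push_neg at hc
  apply hS
  apply Set.Finite.subset (finite_bounded (n+1) R)
  intro a ha
  simp only [Set.mem_setOf_eq]
  by_cases h0 : a = 0
  · intro i; rw [h0]; simp; linarith
  · intro i
    have hlt := hc a ha h0
    have := le_trans (norm_le_pi_norm (fun j : Fin (n+1) => (a j : ℝ)) i) hlt.le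
    simpa using this

lemma norm_cast_ge_one {m : ℕ} (y : Fin m → ℤ) (j : Fin m) (hj : y j ≠ 0) :
    1 ≤ ‖fun i : Fin m => (y i : ℝ)‖ := by
  have h1 : (1:ℝ) ≤ |(y j : ℝ)| := by
    rw [← Int.cast_abs]
    exact_mod_cast Int.one_le_abs hj
  exact le_trans h1 (by simpa using norm_le_pi_norm (fun i : Fin m => (y i : ℝ)) j)

lemma trivial_sim_mem (hn : 1 ≤ n) (θ : Fin n → ℝ) {w' : ℝ} (hw' : w' ≤ 0) :
    {x : Fin (n + 1) → ℤ |
      ‖fun i : Fin n => (x 0 : ℝ) * θ i - (x i.succ : ℝ)‖ ≤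
        ‖fun i : Fin (n + 1) => (x i : ℝ)‖ ^ (-w')}.Infinite := by
  refine Set.infinite_of_injective_forall_mem
    (f := fun k : ℕ => (Fin.cons ((k:ℤ)+1) (fun i => round (((k:ℤ)+1 : ℝ) * θ i)) : Fin (n+1) → ℤ))
    ?_ ?_
  · intro k l hkl
    have := congrFun hkl 0
    simp only [Fin.cons_zero] at this
    omega
  · intro k
    simp only [Set.mem_setOf_eq, Fin.cons_zero, Fin.cons_succ]
    have hb : 1 ≤ ‖fun i : Fin (n+1) =>
        ((Fin.cons ((k:ℤ)+1) (fun i => round (((k:ℤ)+1 : ℝ) * θ i)) : Fin (n+1) → ℤ) i : ℝ)‖ := by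
      apply norm_cast_ge_one _ 0
      simp only [Fin.cons_zero]
      omega
    have h2 : ‖fun i : Fin n => (((k:ℤ)+1 : ℤ) : ℝ) * θ i - (round (((k:ℤ)+1 : ℝ) * θ i) : ℝ)‖
        ≤ 1 := by
      rw [pi_norm_le_iff_of_nonneg (by norm_num)]
      intro i
      rw [Real.norm_eq_abs]
      push_cast
      exact le_trans (abs_sub_round _) (by norm_num)
    refine le_trans ?_ (Real.one_le_rpow hb (by linarith))
    convert h2 using 2


lemma trivial_lin_mem (hn : 1 ≤ n) (θ : Fin n → ℝ) {w' : ℝ} (hw' : w' ≤ 0) :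
    {x : Fin (n + 1) → ℤ |
      |(x 0 : ℝ) + ∑ i : Fin n, (x i.succ : ℝ) * θ i| ≤
        ‖fun i : Fin (n + 1) => (x i : ℝ)‖ ^ (-w')}.Infinite := by
  classical
  have hn0 : 0 < n := hn
  set i₀ : Fin n := ⟨0, hn0⟩ with hi₀
  refine Set.infinite_of_injective_forall_mem
    (f := fun k : ℕ => (Fin.cons (-(round (((k:ℤ)+1 : ℝ) * θ i₀)))
      (fun i => if i = i₀ then (k:ℤ)+1 else 0) : Fin (n+1) → ℤ)) ?_ ?_
  · intro k l hkl
    have h := congrFun hkl (Fin.succ i₀)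
    simp only [Fin.cons_succ, if_pos, if_true] at h
    omega
  · intro k
    simp only [Set.mem_setOf_eq, Fin.cons_zero, Fin.cons_succ]
    have hsum : ∑ i : Fin n, (((if i = i₀ then (k:ℤ)+1 else (0:ℤ) : ℤ)) : ℝ) * θ i
        = (((k:ℤ)+1 : ℤ) : ℝ) * θ i₀ := by
      rw [Finset.sum_congr rfl (fun i _ =>
        show (((if i = i₀ then (k:ℤ)+1 else (0:ℤ) : ℤ)) : ℝ) * θ i
        = if i = i₀ then (((k:ℤ)+1 : ℤ) : ℝ) * θ i else 0 from by split <;> simp)]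
      rw [Finset.sum_ite_eq' Finset.univ i₀]
      simp
    rw [hsum]
    have hb : 1 ≤ ‖fun i : Fin (n+1) =>
        ((Fin.cons (-(round (((k:ℤ)+1 : ℝ) * θ i₀)))
          (fun i => if i = i₀ then (k:ℤ)+1 else 0) : Fin (n+1) → ℤ) i : ℝ)‖ := by
      apply norm_cast_ge_one _ i₀.succ
      simp only [Fin.cons_succ, if_pos, if_true]
      omega
    refine le_trans ?_ (Real.one_le_rpow hb (by linarith))
    have habs : |(((-(round (((k:ℤ)+1 : ℝ) * θ i₀))) : ℤ) : ℝ) + (((k:ℤ)+1 : ℤ) : ℝ) * θ i₀|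
        ≤ 1/2 := by
      push_cast
      rw [show (-(round (((k:ℝ)+1) * θ i₀)) : ℝ) + ((k:ℝ)+1) * θ i₀
          = ((k:ℝ)+1) * θ i₀ - round (((k:ℝ)+1) * θ i₀) by push_cast; ring]
      exact abs_sub_round _
    refine le_trans (le_trans (le_of_eq ?_) habs) (by norm_num)
    push_cast
    ring_nf

set_option maxHeartbeats 1600000 in
lemma main_construction (hn : 1 ≤ n) (θ : Fin n → ℝ)
    (hθ : LinearIndependent ℚ (Fin.cons (1 : ℝ) θ : Fin (n + 1) → ℝ))
    {w₀ w' : ℝ} (hw₀ : 0 < w₀) (hw' : 0 < w')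
    (hlt : w' * (((n:ℝ) - 1) * w₀ + n) < w₀)
    (hinf : {x : Fin (n + 1) → ℤ |
      |(x 0 : ℝ) + ∑ i : Fin n, (x i.succ : ℝ) * θ i| ≤
        ‖fun i : Fin (n + 1) => (x i : ℝ)‖ ^ (-w₀)}.Infinite) :
    {x : Fin (n + 1) → ℤ |
      ‖fun i : Fin n => (x 0 : ℝ) * θ i - (x i.succ : ℝ)‖ ≤
        ‖fun i : Fin (n + 1) => (x i : ℝ)‖ ^ (-w')}.Infinite := by
  classical
  have hn0 : 0 < n := hn
  have hnR : (1:ℝ) ≤ (n:ℝ) := by exact_mod_cast hn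
  have hnRpos : (0:ℝ) < (n:ℝ) := by exact_mod_cast hn0
  set Mθ : ℝ := 1 + ‖θ‖ with hMθdef
  have hMθ1 : 1 ≤ Mθ := by
    have := norm_nonneg θ
    rw [hMθdef]; linarith
  have hMθ : ∀ i, |θ i| ≤ Mθ := by
    intro i
    have := norm_le_pi_norm θ i
    rw [Real.norm_eq_abs] at this
    rw [hMθdef]; linarith
  set e : ℝ := 1 - ((n:ℝ) - 1) * w' with hedef
  have he : 0 < e := by
    rw [hedef]
    by_contra hc
    push_neg at hc
    have h1 : (1:ℝ) ≤ ((n:ℝ) - 1) * w' := by linarith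
    have h2 : 1 * w₀ ≤ (((n:ℝ) - 1) * w') * w₀ := mul_le_mul_of_nonneg_right h1 hw₀.le
    have h3 : 0 < w' * (n:ℝ) := mul_pos hw' hnRpos
    linarith [hlt, h2, h3]
  have he1 : e ≤ 1 := by
    rw [hedef]
    linarith [mul_nonneg (sub_nonneg.2 hnR) hw'.le]
  set γ : ℝ := w₀ * e / n - w' with hγdef
  have hγ : 0 < γ := by
    rw [hγdef, sub_pos, lt_div_iff₀ hnRpos, hedef]
    nlinarith [hlt, hw₀, hw', hnRpos]
  set K : ℝ := 4 * ((1 + Mθ) * n) with hKdef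
  have hK1 : 1 ≤ K := by
    rw [hKdef]
    have h1 : (1:ℝ) * 1 ≤ (1 + Mθ) * n := mul_le_mul (by linarith) hnR zero_le_one (by linarith)
    linarith
  -- the claim : arbitrarily good simultaneous approximations
  have claim : ∀ ε : ℝ, 0 < ε → ∃ y : Fin (n+1) → ℤ, y 0 ≠ 0 ∧
      ‖fun i : Fin n => (y 0 : ℝ) * θ i - (y i.succ : ℝ)‖ ≤ ε ∧
      ‖fun i : Fin n => (y 0 : ℝ) * θ i - (y i.succ : ℝ)‖ ≤
        ‖fun i : Fin (n + 1) => (y i : ℝ)‖ ^ (-w') := by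
    intro ε hε
    set ε' : ℝ := min ε (1/2) with hε'def
    have hε'pos : 0 < ε' := lt_min hε (by norm_num)
    have hε'half : ε' ≤ 1/2 := min_le_right _ _
    set T1 : ℝ := (4 / ε' ^ n) ^ (w₀⁻¹) with hT1def
    set T2 : ℝ := (4 * K ^ w') ^ (γ⁻¹) with hT2def
    set N₀ : ℝ := max 2 (max T1 T2) with hN₀def
    have hN₀2 : 2 ≤ N₀ := le_max_left _ _
    obtain ⟨a, haS, hane, haN⟩ := exists_large hinf (by linarith : (1:ℝ) ≤ N₀)
    set N : ℝ := ‖fun i : Fin (n+1) => (a i : ℝ)‖ with hNdef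
    have hN2 : 2 ≤ N := le_trans hN₀2 haN
    have hN1 : 1 < N := by linarith
    have hNpos : 0 < N := by linarith
    set L : ℝ := (a 0 : ℝ) + ∑ i : Fin n, (a i.succ : ℝ) * θ i with hLdef
    set δ : ℝ := |L| with hδdef
    have hδpos : 0 < δ := abs_pos.2 (L_ne_zero θ hθ a hane)
    have hδle : δ ≤ N ^ (-w₀) := haS
    -- N ^ w₀ is large
    have hNw₀pos : 0 < N ^ w₀ := Real.rpow_pos_of_pos hNpos _
    have hT1N : N ^ w₀ ≥ 4 / ε' ^ n := by
      have h1 : T1 ≤ N := le_trans (le_trans (le_max_left _ _) (le_max_right _ _)) haN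
      have h2 : (0:ℝ) ≤ 4 / ε' ^ n := by positivity
      calc 4 / ε' ^ n = ((4 / ε' ^ n) ^ (w₀⁻¹)) ^ w₀ := by
            rw [Real.rpow_inv_rpow h2 (ne_of_gt hw₀)]
        _ ≤ N ^ w₀ := Real.rpow_le_rpow (by positivity) h1 hw₀.le
    have h4δ : 4 * δ ≤ ε' ^ n := by
      have hq : (0:ℝ) < 4 / ε' ^ n := by positivity
      have h1 : (N ^ w₀)⁻¹ ≤ (4 / ε' ^ n)⁻¹ := inv_anti₀ hq hT1N
      have h2 : δ ≤ (N ^ w₀)⁻¹ := by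
        rw [← Real.rpow_neg hNpos.le]
        exact hδle
      have h3 : (4 / ε' ^ n)⁻¹ = ε' ^ n / 4 := by field_simp
      rw [h3] at h1
      linarith
    have hε'n : ε' ^ n ≤ ε' := by
      calc ε' ^ n ≤ ε' ^ 1 := pow_le_pow_of_le_one hε'pos.le (by linarith) hn
        _ = ε' := pow_one _
    have hδ14 : δ < 1/4 := by linarith
    set A : ℝ := ‖fun i : Fin n => (a i.succ : ℝ)‖ with hAdef
    have hA : ∀ i : Fin n, |(a i.succ : ℝ)| ≤ A := by
      intro i
      simpa using norm_le_pi_norm (fun i : Fin n => (a i.succ : ℝ)) i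
    obtain ⟨y, hy0, hform, hybound⟩ := construction hn θ hθ a hane A hA hδ14
    set ρ : ℝ := (4 * δ) ^ ((n:ℝ)⁻¹) with hρdef
    have hρpos : 0 < ρ := Real.rpow_pos_of_pos (by positivity) _
    have hρn : ρ ^ n = 4 * δ := Real.rpow_inv_natCast_pow (by positivity) (by omega)
    have hρε : ρ ≤ ε' := by
      calc ρ ≤ (ε' ^ n) ^ ((n:ℝ)⁻¹) :=
            Real.rpow_le_rpow (by positivity) h4δ (by positivity)
        _ = ε' := Real.pow_rpow_inv_natCast hε'pos.le (by omega)
    have hρ1 : ρ ≤ 1/2 := le_trans hρε hε'half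
    -- A is at least 1
    have hAsome : ∃ i : Fin n, a i.succ ≠ 0 := by
      by_contra hc
      push_neg at hc
      have ha0 : a 0 ≠ 0 := by
        intro h0
        apply hane
        funext j
        induction j using Fin.cases with
        | zero => exact h0
        | succ i => exact hc i
      have h1 : (1:ℝ) ≤ δ := by
        have hz : ∑ i : Fin n, (a i.succ : ℝ) * θ i = 0 := by
          apply Finset.sum_eq_zero
          intro i _
          rw [hc i]
          simp
        rw [hδdef, hLdef, hz, add_zero, ← Int.cast_abs]
        exact_mod_cast Int.one_le_abs ha0
      linarith
    obtain ⟨iA, hiA⟩ := hAsome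
    have hA1 : 1 ≤ A := by
      refine le_trans ?_ (hA iA)
      rw [← Int.cast_abs]
      exact_mod_cast Int.one_le_abs hiA
    have hA0 : 0 ≤ A := by linarith
    have hAN : A ≤ N := by
      rw [hAdef, pi_norm_le_iff_of_nonneg hNpos.le]
      intro i
      simpa using norm_le_pi_norm (fun j : Fin (n+1) => (a j : ℝ)) i.succ
    have hy0abs : 1 ≤ |(y 0 : ℝ)| := by
      rw [← Int.cast_abs]
      exact_mod_cast Int.one_le_abs hy0
    -- bound on the norm of y
    set Z : ℝ := ‖fun i : Fin (n+1) => (y i : ℝ)‖ with hZdef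
    have hZ1 : 1 ≤ Z := norm_cast_ge_one y 0 hy0
    have hZpos : 0 < Z := by linarith
    have hZle : Z ≤ (1 + Mθ) * |(y 0 : ℝ)| := by
      rw [hZdef, pi_norm_le_iff_of_nonneg (mul_nonneg (by linarith : (0:ℝ) ≤ 1 + Mθ) (abs_nonneg _))]
      intro j
      induction j using Fin.cases with
      | zero =>
        simp only [Real.norm_eq_abs]
        have h1 : 1 * |(y 0 : ℝ)| ≤ (1 + Mθ) * |(y 0 : ℝ)| :=
          mul_le_mul_of_nonneg_right (by linarith) (abs_nonneg _)
        linarith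
      | succ i =>
        simp only [Real.norm_eq_abs]
        have h1 : |(y i.succ : ℝ)| ≤ |(y 0 : ℝ)| * |θ i| + ρ := by
          have h2 : (y i.succ : ℝ) = (y 0 : ℝ) * θ i - ((y 0 : ℝ) * θ i - (y i.succ : ℝ)) := by
            ring
          rw [h2]
          refine le_trans (abs_sub _ _) ?_
          rw [abs_mul]
          exact add_le_add le_rfl (hform i)
        have h3 := mul_le_mul_of_nonneg_left (hMθ i) (abs_nonneg (y 0 : ℝ))
        linarith [h1, h3, hρ1, hy0abs]
    have hy0b : |(y 0 : ℝ)| ≤ (n:ℝ) * A * ρ / δ := (le_div_iff₀ hδpos).2 hybound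
    -- the key multiplicative bound
    have hWnn : 0 ≤ (1 + Mθ) * ((n:ℝ) * A * ρ / δ) := by positivity
    have hZW : Z ≤ (1 + Mθ) * ((n:ℝ) * A * ρ / δ) := by
      refine le_trans hZle ?_
      exact mul_le_mul_of_nonneg_left hy0b (by linarith)
    have hρn_ne : ρ ^ n ≠ 0 := pow_ne_zero _ hρpos.ne'
    have hWeq : (1 + Mθ) * ((n:ℝ) * A * ρ / δ) = K * A * (ρ / ρ ^ n) := by
      have hδρ : δ = ρ ^ n / 4 := by linarith
      rw [hδρ, hKdef]
      field_simp
    have hratio : ρ / ρ ^ n = ρ ^ ((1:ℝ) - (n:ℝ)) := by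
      rw [Real.rpow_sub hρpos, Real.rpow_one, Real.rpow_natCast]
    have hKA0 : (0:ℝ) ≤ K * A := mul_nonneg (by linarith) hA0
    have hWpow : ((1 + Mθ) * ((n:ℝ) * A * ρ / δ)) ^ w'
        = (K * A) ^ w' * (ρ ^ ((1:ℝ) - (n:ℝ))) ^ w' := by
      rw [hWeq, hratio, Real.mul_rpow hKA0 (Real.rpow_nonneg hρpos.le _)]
    have hexp : 1 + ((1:ℝ) - (n:ℝ)) * w' = e := by rw [hedef]; ring
    have hcomb : ρ * (((1 + Mθ) * ((n:ℝ) * A * ρ / δ)) ^ w')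
        = (K * A) ^ w' * ρ ^ e := by
      rw [hWpow, ← Real.rpow_mul hρpos.le, ← hexp, Real.rpow_add hρpos, Real.rpow_one]
      ring
    -- bound ρ ^ e
    have hinv1 : (n:ℝ)⁻¹ ≤ 1 := by
      rw [inv_le_one_iff₀]
      right; exact hnR
    have hie1 : (n:ℝ)⁻¹ * e ≤ 1 := mul_le_one₀ hinv1 he.le he1
    have hρe_le : ρ ^ e ≤ 4 * N ^ (-(w₀ * e / n)) := by
      have h0 : ρ ^ e = (4 * δ) ^ ((n:ℝ)⁻¹ * e) := by
        rw [hρdef, ← Real.rpow_mul (by positivity)]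
      have h1 : (4 * δ) ^ ((n:ℝ)⁻¹ * e) ≤ (4 * N ^ (-w₀)) ^ ((n:ℝ)⁻¹ * e) := by
        refine Real.rpow_le_rpow (by positivity) (by linarith [hδle]) (by positivity)
      have h2 : (4 * N ^ (-w₀)) ^ ((n:ℝ)⁻¹ * e)
          = 4 ^ ((n:ℝ)⁻¹ * e) * (N ^ (-w₀)) ^ ((n:ℝ)⁻¹ * e) :=
        Real.mul_rpow (by norm_num) (Real.rpow_nonneg hNpos.le _)
      have h3 : (N ^ (-w₀)) ^ ((n:ℝ)⁻¹ * e) = N ^ (-(w₀ * e / n)) := by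
        rw [← Real.rpow_mul hNpos.le]
        congr 1
        field_simp
      have h4 : (4:ℝ) ^ ((n:ℝ)⁻¹ * e) ≤ 4 := by
        calc (4:ℝ) ^ ((n:ℝ)⁻¹ * e) ≤ 4 ^ (1:ℝ) :=
              Real.rpow_le_rpow_of_exponent_le (by norm_num) hie1
          _ = 4 := Real.rpow_one _
      have h5 : (0:ℝ) ≤ (N ^ (-(w₀ * e / n))) := Real.rpow_nonneg hNpos.le _
      calc ρ ^ e = (4 * δ) ^ ((n:ℝ)⁻¹ * e) := h0
        _ ≤ (4 * N ^ (-w₀)) ^ ((n:ℝ)⁻¹ * e) := h1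
        _ = 4 ^ ((n:ℝ)⁻¹ * e) * (N ^ (-w₀)) ^ ((n:ℝ)⁻¹ * e) := h2
        _ = 4 ^ ((n:ℝ)⁻¹ * e) * N ^ (-(w₀ * e / n)) := by rw [h3]
        _ ≤ 4 * N ^ (-(w₀ * e / n)) := mul_le_mul_of_nonneg_right h4 h5
    -- conclude ρ * Z ^ w' ≤ 1
    have hKN : (K * A) ^ w' ≤ (K * N) ^ w' := by
      refine Real.rpow_le_rpow hKA0 ?_ hw'.le
      exact mul_le_mul_of_nonneg_left hAN (by linarith)
    have hT2N : 4 * K ^ w' ≤ N ^ γ := by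
      have h1 : T2 ≤ N := le_trans (le_trans (le_max_right _ _) (le_max_right _ _)) haN
      have h2 : (0:ℝ) ≤ 4 * K ^ w' := by positivity
      calc 4 * K ^ w' = ((4 * K ^ w') ^ (γ⁻¹)) ^ γ := by
            rw [Real.rpow_inv_rpow h2 (ne_of_gt hγ)]
        _ ≤ N ^ γ := Real.rpow_le_rpow (by positivity) h1 hγ.le
    have hfinal : ρ * Z ^ w' ≤ 1 := by
      have hZw : Z ^ w' ≤ ((1 + Mθ) * ((n:ℝ) * A * ρ / δ)) ^ w' :=
        Real.rpow_le_rpow (by linarith) hZW hw'.le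
      have step1 : ρ * Z ^ w' ≤ (K * A) ^ w' * ρ ^ e := by
        rw [← hcomb]
        exact mul_le_mul_of_nonneg_left hZw hρpos.le
      have step2 : (K * A) ^ w' * ρ ^ e ≤ (K * N) ^ w' * (4 * N ^ (-(w₀ * e / n))) := by
        exact mul_le_mul hKN hρe_le (Real.rpow_nonneg hρpos.le _)
          (Real.rpow_nonneg (mul_nonneg (by linarith) (by linarith)) _)
      have step3 : (K * N) ^ w' * (4 * N ^ (-(w₀ * e / n)))
          = 4 * K ^ w' * (N ^ w' * N ^ (-(w₀ * e / n))) := by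
        rw [Real.mul_rpow (by linarith) hNpos.le]
        ring
      have step4 : N ^ w' * N ^ (-(w₀ * e / n)) = N ^ (-γ) := by
        rw [← Real.rpow_add hNpos]
        congr 1
        rw [hγdef]
        ring
      have step5 : 4 * K ^ w' * N ^ (-γ) ≤ 1 := by
        rw [Real.rpow_neg hNpos.le, ← div_eq_mul_inv, div_le_one (Real.rpow_pos_of_pos hNpos _)]
        exact hT2N
      calc ρ * Z ^ w' ≤ (K * A) ^ w' * ρ ^ e := step1
        _ ≤ (K * N) ^ w' * (4 * N ^ (-(w₀ * e / n))) := step2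
        _ = 4 * K ^ w' * (N ^ w' * N ^ (-(w₀ * e / n))) := step3
        _ = 4 * K ^ w' * N ^ (-γ) := by rw [step4]
        _ ≤ 1 := step5
    -- wrap up the claim
    have hq : ‖fun i : Fin n => (y 0 : ℝ) * θ i - (y i.succ : ℝ)‖ ≤ ρ := by
      rw [pi_norm_le_iff_of_nonneg hρpos.le]
      intro i
      rw [Real.norm_eq_abs]
      exact hform i
    refine ⟨y, hy0, le_trans hq (le_trans hρε (min_le_left _ _)), ?_⟩
    have hZw_pos : 0 < Z ^ w' := Real.rpow_pos_of_pos hZpos _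
    have h1 : ρ ≤ (Z ^ w')⁻¹ := by
      rw [← one_div]
      exact (le_div_iff₀ hZw_pos).2 hfinal
    have h2 : Z ^ (-w') = (Z ^ w')⁻¹ := Real.rpow_neg hZpos.le _
    rw [hZdef] at h2
    rw [h2]
    exact le_trans hq h1
  -- deduce infiniteness from the claim
  by_contra hfin
  rw [Set.not_infinite] at hfin
  set q : (Fin (n+1) → ℤ) → ℝ :=
    fun y => ‖fun i : Fin n => (y 0 : ℝ) * θ i - (y i.succ : ℝ)‖ with hqdef
  set S' : Set (Fin (n+1) → ℤ) := {x | (x ∈ {x : Fin (n + 1) → ℤ |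
      ‖fun i : Fin n => (x 0 : ℝ) * θ i - (x i.succ : ℝ)‖ ≤
        ‖fun i : Fin (n + 1) => (x i : ℝ)‖ ^ (-w')}) ∧ x 0 ≠ 0} with hS'def
  have hS'fin : S'.Finite := hfin.subset (fun x hx => hx.1)
  have hS'ne : S'.Nonempty := by
    obtain ⟨y, hy0, _, hymem⟩ := claim 1 one_pos
    exact ⟨y, hymem, hy0⟩
  obtain ⟨b, hbS', hbmin⟩ := Set.exists_min_image S' q hS'fin hS'ne
  have hqb : 0 < q b := by
    have h1 : (b 0 : ℝ) * θ ⟨0, hn0⟩ - (b (Fin.succ ⟨0, hn0⟩) : ℝ) ≠ 0 :=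
      form_ne_zero θ hθ b hbS'.2 ⟨0, hn0⟩
    have h2 : 0 < |(b 0 : ℝ) * θ ⟨0, hn0⟩ - (b (Fin.succ ⟨0, hn0⟩) : ℝ)| := abs_pos.2 h1
    refine lt_of_lt_of_le h2 ?_
    simpa using norm_le_pi_norm (fun i : Fin n => (b 0 : ℝ) * θ i - (b i.succ : ℝ)) ⟨0, hn0⟩
  obtain ⟨y, hy0, hyq, hymem⟩ := claim (q b / 2) (by linarith)
  have hyS' : y ∈ S' := ⟨hymem, hy0⟩
  have := hbmin y hyS'
  rw [hqdef] at this
  simp only at this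
  linarith [hyq, this]

lemma ereal_le_of_forall_lt {c : ℝ} {b : EReal} (hc : 0 < c)
    (h : ∀ x : ℝ, 0 < x → x < c → (x : EReal) ≤ b) : (c : EReal) ≤ b := by
  by_contra hb
  push_neg at hb
  induction b with
  | bot =>
    have := h (c/2) (by linarith) (by linarith)
    simp at this
  | coe r =>
    have hrc : r < c := by exact_mod_cast hb
    set x := (max 0 r + c)/2 with hx
    have hmax : max 0 r < c := max_lt hc hrc
    have h0 : 0 < x := by
      have := le_max_left 0 r
      rw [hx]; linarith
    have hxc : x < c := by rw [hx]; linarith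
    have hrx : r < x := by
      have h1 := le_max_right 0 r
      rw [hx]; linarith
    have := h x h0 hxc
    rw [EReal.coe_le_coe_iff] at this
    linarith
  | top => exact absurd hb (by simp)


/-- Khintchine's Transference Principle, lower bound:
`ω_0(Θ) ≥ ω_{n-1}(Θ) / ((n-1) ω_{n-1}(Θ) + n)`, interpreted as
`ω_0(Θ) ≥ 1/(n-1)` when `ω_{n-1}(Θ) = +∞`. -/
theorem khintchine_transference_lower (n : ℕ) (hn : 1 ≤ n) (θ : Fin n → ℝ)
    (hθ : LinearIndependent ℚ (Fin.cons (1 : ℝ) θ : Fin (n + 1) → ℝ)) :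
    (∀ w : ℝ, omegaLin n θ = (w : EReal) →
      ((w / (((n : ℝ) - 1) * w + (n : ℝ)) : ℝ) : EReal) ≤ omegaSim n θ) ∧
    (omegaLin n θ = ⊤ → ((1 / ((n : ℝ) - 1) : ℝ) : EReal) ≤ omegaSim n θ) := by
  have hn0 : 0 < n := hn
  have hnR : (1:ℝ) ≤ (n:ℝ) := by exact_mod_cast hn
  have h0sim : ((0:ℝ) : EReal) ≤ omegaSim n θ :=
    le_sSup ⟨0, trivial_sim_mem hn θ le_rfl, rfl⟩
  constructor
  · intro w hw
    have h0lin : ((0:ℝ) : EReal) ≤ omegaLin n θ :=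
      le_sSup ⟨0, trivial_lin_mem hn θ le_rfl, rfl⟩
    have hw0 : 0 ≤ w := by
      rw [hw] at h0lin
      exact_mod_cast h0lin
    rcases eq_or_lt_of_le hw0 with heq | hpos
    · rw [← heq]
      have hz : ((0:ℝ) / (((n : ℝ) - 1) * 0 + (n : ℝ)) : ℝ) = 0 := by simp
      rw [hz]
      exact h0sim
    · have hd : 0 < ((n:ℝ)-1) * w + n := by
        have := mul_nonneg (sub_nonneg.2 hnR) hw0
        linarith
      have htpos : 0 < w / (((n:ℝ)-1) * w + n) := div_pos hpos hd
      refine ereal_le_of_forall_lt htpos ?_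
      intro x hx0 hxt
      have hcx : x * (((n:ℝ)-1) * w + n) < w := (lt_div_iff₀ hd).1 hxt
      have hex : 0 < 1 - ((n:ℝ)-1) * x := by
        by_contra hcon
        push_neg at hcon
        have h1 : (1:ℝ) ≤ ((n:ℝ)-1) * x := by linarith
        have h2 : 1 * w ≤ (((n:ℝ)-1) * x) * w := mul_le_mul_of_nonneg_right h1 hpos.le
        have h3 : 0 < x * (n:ℝ) := mul_pos hx0 (by linarith)
        linarith [hcx, h2, h3]
      set c := x * (n:ℝ) / (1 - ((n:ℝ)-1) * x) with hc
      have hcpos : 0 < c := div_pos (mul_pos hx0 (by linarith)) hex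
      have hcw : c < w := by
        rw [hc, div_lt_iff₀ hex]
        nlinarith [hcx]
      have hlt2 : (c : EReal) < omegaLin n θ := by
        rw [hw]
        exact_mod_cast hcw
      obtain ⟨bb, hbbmem, hcbb⟩ := lt_sSup_iff.1 hlt2
      obtain ⟨w₀, hw₀mem, rfl⟩ := hbbmem
      have hcw₀ : c < w₀ := by exact_mod_cast hcbb
      have hw₀pos : 0 < w₀ := lt_trans hcpos hcw₀
      have hmain : x * (((n:ℝ)-1) * w₀ + n) < w₀ := by
        rw [hc, div_lt_iff₀ hex] at hcw₀
        nlinarith [hcw₀]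
      exact le_sSup ⟨x, main_construction hn θ hθ hw₀pos hx0 hmain hw₀mem, rfl⟩
  · intro htop
    by_cases h1 : n = 1
    · subst h1
      have hz : (1 / (((1:ℕ):ℝ) - 1) : ℝ) = 0 := by norm_num
      rw [hz]
      exact h0sim
    · have hn2 : 2 ≤ n := by omega
      have hn2R : (2:ℝ) ≤ (n:ℝ) := by exact_mod_cast hn2
      have hd : 0 < (n:ℝ) - 1 := by linarith
      refine ereal_le_of_forall_lt (by positivity) ?_
      intro x hx0 hxc
      have hex : 0 < 1 - ((n:ℝ)-1) * x := by
        have h2 : x * ((n:ℝ)-1) < 1 := (lt_div_iff₀ hd).1 hxc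
        nlinarith [h2]
      set c := x * (n:ℝ) / (1 - ((n:ℝ)-1) * x) with hc
      have hcpos : 0 < c := div_pos (mul_pos hx0 (by linarith)) hex
      have hlt2 : (c : EReal) < omegaLin n θ := by
        rw [htop]
        exact EReal.coe_lt_top c
      obtain ⟨bb, hbbmem, hcbb⟩ := lt_sSup_iff.1 hlt2
      obtain ⟨w₀, hw₀mem, rfl⟩ := hbbmem
      have hcw₀ : c < w₀ := by exact_mod_cast hcbb
      have hw₀pos : 0 < w₀ := lt_trans hcpos hcw₀
      have hmain : x * (((n:ℝ)-1) * w₀ + n) < w₀ := by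
        rw [hc, div_lt_iff₀ hex] at hcw₀
        nlinarith [hcw₀]
      exact le_sSup ⟨x, main_construction hn θ hθ hw₀pos hx0 hmain hw₀mem, rfl⟩
end

section
/- Khintchine's Transference Principle, upper bound: for any point Θ = (θ_1,…,θ_n) ∈ R^n with 1, θ_1, …, θ_n linearly independent over Q, one has ω_0(Θ) ≤ (ω_{n−1}(Θ) − n + 1)/n (with ω_0(Θ) unrestricted when ω_{n−1}(Θ) = +∞). -/
/-!
Let `x = (q, p)` satisfy `‖q Θ - p‖ ≤ ‖x‖ ^ (-ω)` with `‖x‖` large. Siegel's lemma gives a nonzero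
integer vector `y` orthogonal to `x` with `‖y‖ ≤ ((n + 1) ‖x‖) ^ (1 / n)`. Orthogonality turns
`q L(y)`, where `L(y) = y₀ + y₁ θ₁ + ⋯ + yₙ θₙ`, into `∑ yᵢ (q θᵢ - pᵢ)`; since `‖x‖ ≪ |q|`, this
gives `|L(y)| ≪ ‖y‖ ‖x‖ ^ (-1 - ω) ≪ ‖y‖ ^ (-(n ω + n - 1))`. By the linear independence of
`1, θ₁, …, θₙ` we have `L(y) ≠ 0`, while `|L(y)| → 0` as `‖x‖ → ∞`, so infinitely many distinct
`y` arise. The implied constant is absorbed by lowering the exponent slightly.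
-/

open Filter Topology

section IntVectors

variable {ι : Type*} [Fintype ι]

lemma norm_intCast_pi (x : ι → ℤ) : ‖fun i => (x i : ℝ)‖ = ‖x‖ := by
  simp only [Pi.norm_def]
  congr 2

lemma tendsto_norm_intVec_cofinite_atTop : Tendsto (fun x : ι → ℤ => ‖x‖) cofinite atTop := by
  simpa only [cocompact_eq_cofinite] using tendsto_norm_cocompact_atTop (E := ι → ℤ)

lemma exists_ne_zero_dotProduct_eq_zero_norm_le (h : 1 < Fintype.card ι) (x : ι → ℤ) :
    ∃ y : ι → ℤ, y ≠ 0 ∧ x ⬝ᵥ y = 0 ∧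
      ‖y‖ ≤ (Fintype.card ι * max 1 ‖x‖) ^ (1 / (Fintype.card ι - 1 : ℝ)) := by
  -- Mathlib states Siegel's lemma for the entrywise sup norm on matrices, a non-global instance.
  let := @Matrix.seminormedAddCommGroup Unit ι ℤ _ _ _
  obtain ⟨y, hy0, hxy, hy⟩ := Int.Matrix.exists_ne_zero_int_vec_norm_le
    (Matrix.replicateRow Unit x) (by simpa using h) (by simp)
  refine ⟨y, hy0, ?_, ?_⟩
  · simpa [Matrix.mulVec] using congrFun hxy ()
  · simpa [Matrix.norm_replicateRow] using hy

lemma Filter.Frequently.abs_le_rpow_of_abs_le_mul_rpow {f : (ι → ℤ) → ℝ} {C μ ν : ℝ} (hν : ν < μ)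
    (h : ∃ᶠ y in cofinite, |f y| ≤ C * ‖y‖ ^ (-μ)) : ∃ᶠ y in cofinite, |f y| ≤ ‖y‖ ^ (-ν) := by
  have hlarge : ∀ᶠ y : ι → ℤ in cofinite, 0 < ‖y‖ ∧ C ≤ ‖y‖ ^ (μ - ν) :=
    tendsto_norm_intVec_cofinite_atTop.eventually
      ((eventually_gt_atTop 0).and ((tendsto_rpow_atTop (sub_pos.2 hν)).eventually_ge_atTop C))
  refine h.and_eventually hlarge |>.mono fun y ⟨hfy, hy0, hCy⟩ => hfy.trans ?_
  calc C * ‖y‖ ^ (-μ) ≤ ‖y‖ ^ (μ - ν) * ‖y‖ ^ (-μ) := by gcongr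
    _ = ‖y‖ ^ (-ν) := by rw [← Real.rpow_add hy0]; ring_nf

end IntVectors

lemma Set.infinite_of_forall_exists_pos_lt {α : Type*} {s : Set α} (f : α → ℝ)
    (h : ∀ ε > 0, ∃ a ∈ s, 0 < f a ∧ f a < ε) : s.Infinite := by
  intro hs
  obtain ⟨a₁, ha₁s, ha₁, -⟩ := h 1 one_pos
  obtain ⟨a₀, ⟨-, ha₀⟩, hmin⟩ := Set.exists_min_image {a ∈ s | 0 < f a} f
    (hs.subset fun _ h => h.1) ⟨a₁, ha₁s, ha₁⟩
  obtain ⟨a, has, ha, hlt⟩ := h (f a₀) ha₀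
  exact (hmin a ⟨has, ha⟩).not_gt hlt

section RpowBounds

variable {a X Y p q : ℝ}

lemma mul_rpow_neg_le_mul_rpow_sub (ha : 0 ≤ a) (hX : 0 < X) (hYX : Y ≤ (a * X) ^ q) :
    Y * X ^ (-p) ≤ a ^ q * X ^ (-(p - q)) := by
  calc Y * X ^ (-p) ≤ (a * X) ^ q * X ^ (-p) := by gcongr
    _ = a ^ q * X ^ (-(p - q)) := by
        rw [Real.mul_rpow ha hX.le, mul_assoc, ← Real.rpow_add hX, neg_sub, sub_eq_add_neg]

lemma mul_rpow_neg_le_mul_self_rpow (ha : 0 < a) (hX : 0 < X) (hY : 0 < Y) (hq : 0 < q)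
    (hp : 0 ≤ p) (hYX : Y ≤ (a * X) ^ q) : Y * X ^ (-p) ≤ a ^ p * Y ^ (1 - p / q) := by
  have hYq : Y ^ q⁻¹ ≤ a * X := by
    simpa [← Real.rpow_mul (by positivity : 0 ≤ a * X), hq.ne'] using
      Real.rpow_le_rpow hY.le hYX (inv_nonneg.2 hq.le)
  calc Y * X ^ (-p) = Y * (a ^ p * (a * X) ^ (-p)) := by
        rw [Real.mul_rpow ha.le hX.le, ← mul_assoc (a ^ p), ← Real.rpow_add ha, add_neg_cancel,
          Real.rpow_zero, one_mul]
    _ ≤ Y * (a ^ p * (Y ^ q⁻¹) ^ (-p)) := by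
        gcongr ?_ * (_ * ?_)
        exact Real.rpow_le_rpow_of_nonpos (by positivity) hYq (neg_nonpos.2 hp)
    _ = a ^ p * Y ^ (1 - p / q) := by
        rw [show 1 - p / q = 1 + q⁻¹ * -p by ring, Real.rpow_add hY, Real.rpow_one,
          Real.rpow_mul hY.le]
        ring

end RpowBounds

section Khintchine

variable {n : ℕ} {θ : Fin n → ℝ}

def simError (θ : Fin n → ℝ) (x : Fin (n + 1) → ℤ) : Fin n → ℝ :=
  fun i => x 0 * θ i - x i.succ

def linForm (θ : Fin n → ℝ) (y : Fin (n + 1) → ℤ) : ℝ :=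
  y 0 + ∑ i, y i.succ * θ i

def simApproxSet (θ : Fin n → ℝ) (ω : ℝ) : Set (Fin (n + 1) → ℤ) :=
  {x | ‖simError θ x‖ ≤ ‖x‖ ^ (-ω)}

def linApproxSet (θ : Fin n → ℝ) (ω : ℝ) : Set (Fin (n + 1) → ℤ) :=
  {y | |linForm θ y| ≤ ‖y‖ ^ (-ω)}

lemma omegaSim_eq (n : ℕ) (θ : Fin n → ℝ) :
    omegaSim n θ = sSup (Real.toEReal '' {ω | (simApproxSet θ ω).Infinite}) := by
  simp only [omegaSim, simApproxSet, norm_intCast_pi]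
  rfl

lemma omegaLin_eq (n : ℕ) (θ : Fin n → ℝ) :
    omegaLin n θ = sSup (Real.toEReal '' {ω | (linApproxSet θ ω).Infinite}) := by
  simp only [omegaLin, linApproxSet, linForm, norm_intCast_pi]

lemma coe_le_omegaLin {ω : ℝ} (h : (linApproxSet θ ω).Infinite) : (ω : EReal) ≤ omegaLin n θ :=
  omegaLin_eq n θ ▸ le_sSup ⟨ω, h, rfl⟩

lemma infinite_simApproxSet_zero (θ : Fin n → ℝ) : (simApproxSet θ 0).Infinite := by
  refine Set.infinite_of_injective_forall_mem
    (f := fun k : ℤ => (Fin.cons k fun i => round (k * θ i) : Fin (n + 1) → ℤ))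
    (fun a b hab => by simpa using congrFun hab 0) fun k => ?_
  simp only [simApproxSet, Set.mem_ofPred_eq, neg_zero, Real.rpow_zero]
  refine pi_norm_le_iff_of_nonneg zero_le_one |>.2 fun i => ?_
  exact (Real.norm_eq_abs _ ▸ abs_sub_round _).trans (by norm_num)

lemma infinite_linApproxSet_zero (hn : 1 ≤ n) (θ : Fin n → ℝ) : (linApproxSet θ 0).Infinite := by
  obtain ⟨m, rfl⟩ : ∃ m, n = m + 1 := ⟨n - 1, by omega⟩
  refine Set.infinite_of_injective_forall_mem
    (f := fun k : ℤ => (Fin.cons (-round (k * θ 0)) (Pi.single 0 k) : Fin (m + 2) → ℤ))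
    (fun a b hab => by simpa using congrFun hab 1) fun k => ?_
  simpa [linApproxSet, linForm, Pi.single_apply, neg_add_eq_sub] using
    (abs_sub_round (k * θ 0)).trans (by norm_num)

lemma omegaLin_nonneg (hn : 1 ≤ n) (θ : Fin n → ℝ) : 0 ≤ omegaLin n θ := by
  exact_mod_cast coe_le_omegaLin (infinite_linApproxSet_zero hn θ)

lemma linForm_ne_zero (hθ : LinearIndependent ℚ (Fin.cons (1 : ℝ) θ : Fin (n + 1) → ℝ))
    {y : Fin (n + 1) → ℤ} (hy : y ≠ 0) : linForm θ y ≠ 0 := by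
  refine fun h => hy <| funext <| Fintype.linearIndependent_iff.1 (hθ.restrict_scalars' ℤ) y ?_
  simpa [Fin.sum_univ_succ, linForm] using h

lemma intCast_mul_linForm {x y : Fin (n + 1) → ℤ} (hxy : x ⬝ᵥ y = 0) :
    (x 0 : ℝ) * linForm θ y = ∑ i, (y i.succ : ℝ) * simError θ x i := by
  have hxyR : (x 0 : ℝ) * y 0 + ∑ i : Fin n, (x i.succ : ℝ) * y i.succ = 0 := by
    simpa [dotProduct, Fin.sum_univ_succ] using congrArg (Int.cast : ℤ → ℝ) hxy
  have hsum : ∑ i, (y i.succ : ℝ) * simError θ x i =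
      ∑ i, ((x 0 : ℝ) * (y i.succ * θ i) - x i.succ * y i.succ) :=
    Finset.sum_congr rfl fun i _ => by simp only [simError]; ring
  rw [hsum, Finset.sum_sub_distrib, ← Finset.mul_sum, linForm]
  linear_combination hxyR

lemma abs_sum_succ_mul_le {m : ℕ} (u : Fin (m + 1) → ℤ) (e : Fin m → ℝ) :
    |∑ i, (u i.succ : ℝ) * e i| ≤ m * ‖u‖ * ‖e‖ := by
  calc |∑ i, (u i.succ : ℝ) * e i| ≤ ∑ i, |(u i.succ : ℝ) * e i| := Finset.abs_sum_le_sum_abs _ _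
    _ ≤ ∑ _i : Fin m, ‖u‖ * ‖e‖ := Finset.sum_le_sum fun i _ => by
        rw [abs_mul, ← Int.norm_eq_abs, ← Real.norm_eq_abs]
        exact mul_le_mul (norm_le_pi_norm u _) (norm_le_pi_norm e i) (norm_nonneg _) (norm_nonneg _)
    _ = m * ‖u‖ * ‖e‖ := by simp [mul_assoc]

lemma norm_le_of_norm_simError_le_one {x : Fin (n + 1) → ℤ} (he : ‖simError θ x‖ ≤ 1)
    (hx : 1 < ‖x‖) : ‖x‖ ≤ (‖θ‖ + 2) * |(x 0 : ℝ)| := by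
  have hbound : ‖x‖ ≤ (‖θ‖ + 1) * |(x 0 : ℝ)| + ‖simError θ x‖ := by
    refine pi_norm_le_iff_of_nonneg (by positivity) |>.2 fun i => ?_
    rw [Int.norm_eq_abs]
    refine Fin.cases ?_ (fun j => ?_) i
    · nlinarith [norm_nonneg θ, abs_nonneg (x 0 : ℝ), norm_nonneg (simError θ x)]
    · have hθj : |θ j| ≤ ‖θ‖ := Real.norm_eq_abs (θ j) ▸ norm_le_pi_norm θ j
      have hej : |simError θ x j| ≤ ‖simError θ x‖ :=
        Real.norm_eq_abs (simError θ x j) ▸ norm_le_pi_norm (simError θ x) j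
      calc |(x j.succ : ℝ)| = |x 0 * θ j - simError θ x j| := by simp [simError]
        _ ≤ |(x 0 : ℝ)| * |θ j| + |simError θ x j| := (abs_sub _ _).trans_eq (by rw [abs_mul])
        _ ≤ _ := by nlinarith [abs_nonneg (x 0 : ℝ)]
  have hx0 : 1 ≤ |(x 0 : ℝ)| := by
    rcases eq_or_ne (x 0) 0 with h0 | h0
    · rw [h0, Int.cast_zero, abs_zero, mul_zero, zero_add] at hbound
      linarith
    · exact_mod_cast Int.one_le_abs h0
  linarith

lemma norm_mul_abs_linForm_le {ω : ℝ} (hω : 0 ≤ ω) {x y : Fin (n + 1) → ℤ}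
    (hx : x ∈ simApproxSet θ ω) (hx1 : 1 < ‖x‖) (hxy : x ⬝ᵥ y = 0) :
    ‖x‖ * |linForm θ y| ≤ (‖θ‖ + 2) * n * ‖y‖ * ‖x‖ ^ (-ω) := by
  have he : ‖simError θ x‖ ≤ 1 :=
    hx.trans (Real.rpow_le_one_of_one_le_of_nonpos hx1.le (neg_nonpos.2 hω))
  calc ‖x‖ * |linForm θ y| ≤ (‖θ‖ + 2) * |(x 0 : ℝ)| * |linForm θ y| :=
        mul_le_mul_of_nonneg_right (norm_le_of_norm_simError_le_one he hx1) (abs_nonneg _)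
    _ = (‖θ‖ + 2) * |∑ i, (y i.succ : ℝ) * simError θ x i| := by
        rw [← intCast_mul_linForm hxy, abs_mul, mul_assoc]
    _ ≤ (‖θ‖ + 2) * (n * ‖y‖ * ‖x‖ ^ (-ω)) := by
        gcongr
        exact (abs_sum_succ_mul_le y _).trans (by gcongr; exact hx)
    _ = (‖θ‖ + 2) * n * ‖y‖ * ‖x‖ ^ (-ω) := by ring

lemma exists_abs_linForm_le (hn : 1 ≤ n) {ω : ℝ} (hω : 0 ≤ ω) {x : Fin (n + 1) → ℤ}
    (hx : x ∈ simApproxSet θ ω) (hx1 : 1 < ‖x‖) :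
    ∃ y : Fin (n + 1) → ℤ, y ≠ 0 ∧
      |linForm θ y| ≤ (‖θ‖ + 2) * n * (n + 1) ^ (1 + ω) * ‖y‖ ^ (-(n * ω + n - 1)) ∧
      |linForm θ y| ≤ (‖θ‖ + 2) * n * (n + 1) ^ (1 / n : ℝ) * ‖x‖ ^ (-(1 + ω - 1 / n)) := by
  have hn' : (0 : ℝ) < n := by exact_mod_cast hn
  obtain ⟨y, hy0, hxy, hyx⟩ := exists_ne_zero_dotProduct_eq_zero_norm_le (by simp; omega) x
  simp only [Fintype.card_fin, Nat.cast_add, Nat.cast_one, add_sub_cancel_right,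
    max_eq_right hx1.le] at hyx
  have hx0 : 0 < ‖x‖ := one_pos.trans hx1
  have hy : 0 < ‖y‖ := norm_pos_iff.2 hy0
  have hL : |linForm θ y| ≤ (‖θ‖ + 2) * n * (‖y‖ * ‖x‖ ^ (-(1 + ω))) := by
    calc |linForm θ y| = ‖x‖⁻¹ * (‖x‖ * |linForm θ y|) := by field_simp
      _ ≤ ‖x‖⁻¹ * ((‖θ‖ + 2) * n * ‖y‖ * ‖x‖ ^ (-ω)) :=
          mul_le_mul_of_nonneg_left (norm_mul_abs_linForm_le hω hx hx1 hxy) (by positivity)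
      _ = (‖θ‖ + 2) * n * (‖y‖ * ‖x‖ ^ (-(1 + ω))) := by
          rw [neg_add, Real.rpow_add hx0, Real.rpow_neg_one]
          ring
  simp only [mul_assoc ((‖θ‖ + 2) * (n : ℝ))]
  refine ⟨y, hy0, hL.trans (mul_le_mul_of_nonneg_left ?_ (by positivity)),
    hL.trans (mul_le_mul_of_nonneg_left ?_ (by positivity))⟩
  · have h := mul_rpow_neg_le_mul_self_rpow (p := 1 + ω) (by positivity) hx0 hy (by positivity)
      (by positivity) hyx
    rwa [div_div_eq_mul_div, div_one, show 1 - (1 + ω) * n = -(n * ω + n - 1) by ring] at h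
  · exact mul_rpow_neg_le_mul_rpow_sub (by positivity) hx0 hyx

theorem infinite_linApproxSet_of_infinite_simApproxSet (hn : 1 ≤ n)
    (hθ : LinearIndependent ℚ (Fin.cons (1 : ℝ) θ : Fin (n + 1) → ℝ)) {ω ν : ℝ} (hω : 0 ≤ ω)
    (hν₀ : 0 ≤ ν) (hν : ν < n * ω + n - 1) (hS : (simApproxSet θ ω).Infinite) :
    (linApproxSet θ ν).Infinite := by
  have hn' : (0 : ℝ) < n := by exact_mod_cast hn
  have hs : 0 < 1 + ω - 1 / n := by
    rw [sub_pos, div_lt_iff₀ hn']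
    linarith
  set C : ℝ := (‖θ‖ + 2) * n * (n + 1) ^ (1 / n : ℝ)
  have hC : Tendsto (fun x : Fin (n + 1) → ℤ => C * ‖x‖ ^ (-(1 + ω - 1 / n))) cofinite (𝓝 0) := by
    simpa using ((tendsto_rpow_neg_atTop hs).comp tendsto_norm_intVec_cofinite_atTop).const_mul C
  have hsmall : ∀ ε > 0, ∃ y ∈ {y | |linForm θ y| ≤
      (‖θ‖ + 2) * n * (n + 1) ^ (1 + ω) * ‖y‖ ^ (-(n * ω + n - 1))},
      0 < |linForm θ y| ∧ |linForm θ y| < ε := by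
    intro ε hε
    have hlarge : ∀ᶠ x : Fin (n + 1) → ℤ in cofinite,
        1 < ‖x‖ ∧ C * ‖x‖ ^ (-(1 + ω - 1 / n)) < ε :=
      (tendsto_norm_intVec_cofinite_atTop.eventually (eventually_gt_atTop 1)).and
        (hC.eventually (gt_mem_nhds hε))
    obtain ⟨x, hxS, hx1, hxε⟩ :=
      ((frequently_cofinite_iff_infinite.2 hS).and_eventually hlarge).exists
    obtain ⟨y, hy0, hyμ, hyx⟩ := exists_abs_linForm_le hn hω hxS hx1
    exact ⟨y, hyμ, abs_pos.2 (linForm_ne_zero hθ hy0), hyx.trans_lt hxε⟩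
  have hT := frequently_cofinite_iff_infinite.2 (Set.infinite_of_forall_exists_pos_lt _ hsmall)
  exact frequently_cofinite_iff_infinite.1 (hT.abs_le_rpow_of_abs_le_mul_rpow hν)

theorem coe_le_omegaLin_of_infinite_simApproxSet (hn : 1 ≤ n)
    (hθ : LinearIndependent ℚ (Fin.cons (1 : ℝ) θ : Fin (n + 1) → ℝ)) {ω : ℝ} (hω : 0 ≤ ω)
    (hS : (simApproxSet θ ω).Infinite) : ((n * ω + n - 1 : ℝ) : EReal) ≤ omegaLin n θ := by
  refine EReal.ge_of_forall_gt_iff_ge.1 fun ν hν => ?_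
  rcases lt_or_ge ν 0 with hν₀ | hν₀
  · exact (EReal.coe_le_coe_iff.2 hν₀.le).trans (omegaLin_nonneg hn θ)
  · exact coe_le_omegaLin <| infinite_linApproxSet_of_infinite_simApproxSet hn hθ hω hν₀
      (EReal.coe_lt_coe_iff.1 hν) hS

end Khintchine

/-- Khintchine's Transference Principle, upper bound:
`ω_0(Θ) ≤ (ω_{n-1}(Θ) - n + 1)/n` (no restriction when `ω_{n-1}(Θ) = +∞`). -/
theorem khintchine_transference_upper (n : ℕ) (hn : 1 ≤ n) (θ : Fin n → ℝ)
    (hθ : LinearIndependent ℚ (Fin.cons (1 : ℝ) θ : Fin (n + 1) → ℝ)) :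
    ∀ w : ℝ, omegaLin n θ = (w : EReal) →
      omegaSim n θ ≤ (((w - (n : ℝ) + 1) / (n : ℝ) : ℝ) : EReal) := by
  intro w hw
  have hn' : (0 : ℝ) < n := by exact_mod_cast hn
  rw [omegaSim_eq]
  refine sSup_le ?_
  rintro _ ⟨ω, hω, rfl⟩
  have hω₀ : (simApproxSet θ (max ω 0)).Infinite := by
    rcases le_total 0 ω with h | h
    · rwa [max_eq_left h]
    · simpa only [max_eq_right h] using infinite_simApproxSet_zero θ
  have key := coe_le_omegaLin_of_infinite_simApproxSet hn hθ (le_max_right ω 0) hω₀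
  rw [hw, EReal.coe_le_coe_iff] at key
  rw [EReal.coe_le_coe_iff, le_div_iff₀ hn']
  nlinarith [le_max_left ω 0]
end
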